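/- arXiv:1903.02868 — 2 statements merged into one kernel-verified Lean document; each statement's English description precedes it below -/
import Mathlib

section
/- In a 2-agent 2×2 general-sum game with u_r u_c > 0 (so the linearization matrix U has two real eigenvalues), if both agents follow GA-SPP with γ₀ and η satisfying Conditions 1–3, then from any initial strategy pair the sequence (α_k,β_k) converges to a point that is a Nash equilibrium. -/
/- Framework for 2-agent 2×2 general-sum games with scalar strategies
   α, β ∈ [0,1] (the probability of the first action). -/

open Filter Topology

noncomputable section

/-- Projection of a real number onto [0, 1] (clamping). -/
def clamp (x : ℝ) : ℝ := max 0 (min 1 x)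

/-- Row player's expected payoff. -/
def Vr2 (R : Matrix (Fin 2) (Fin 2) ℝ) (α β : ℝ) : ℝ :=
  R 0 0 * (α * β) + R 0 1 * (α * (1 - β)) +
  R 1 0 * ((1 - α) * β) + R 1 1 * ((1 - α) * (1 - β))

/-- Column player's expected payoff. -/
def Vc2 (C : Matrix (Fin 2) (Fin 2) ℝ) (α β : ℝ) : ℝ :=
  C 0 0 * (α * β) + C 0 1 * (α * (1 - β)) +
  C 1 0 * ((1 - α) * β) + C 1 1 * ((1 - α) * (1 - β))

def ur2 (R : Matrix (Fin 2) (Fin 2) ℝ) : ℝ := R 0 0 + R 1 1 - R 0 1 - R 1 0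
def br2 (R : Matrix (Fin 2) (Fin 2) ℝ) : ℝ := R 0 1 - R 1 1
def uc2 (C : Matrix (Fin 2) (Fin 2) ℝ) : ℝ := C 0 0 + C 1 1 - C 0 1 - C 1 0
def bc2 (C : Matrix (Fin 2) (Fin 2) ℝ) : ℝ := C 1 0 - C 1 1

/-- ∂_α V_r(α, β) = u_r β + b_r. -/
def dVr2 (R : Matrix (Fin 2) (Fin 2) ℝ) (β : ℝ) : ℝ := ur2 R * β + br2 R

/-- ∂_β V_c(α, β) = u_c α + b_c. -/
def dVc2 (C : Matrix (Fin 2) (Fin 2) ℝ) (α : ℝ) : ℝ := uc2 C * α + bc2 C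

/-- (α, β) is a Nash equilibrium of the 2×2 game. -/
def IsNash2 (R C : Matrix (Fin 2) (Fin 2) ℝ) (α β : ℝ) : Prop :=
  α ∈ Set.Icc (0 : ℝ) 1 ∧ β ∈ Set.Icc (0 : ℝ) 1 ∧
  (∀ α' ∈ Set.Icc (0 : ℝ) 1, Vr2 R α' β ≤ Vr2 R α β) ∧
  (∀ β' ∈ Set.Icc (0 : ℝ) 1, Vc2 C α β' ≤ Vc2 C α β)

/-- δ = max entry − min entry of a 2×2 payoff matrix. -/
def spread2 (M : Matrix (Fin 2) (Fin 2) ℝ) : ℝ :=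
  (Finset.univ.sup' Finset.univ_nonempty fun p : Fin 2 × Fin 2 => M p.1 p.2)
  - (Finset.univ.inf' Finset.univ_nonempty fun p : Fin 2 × Fin 2 => M p.1 p.2)

/-- Conditions 1–3 on the initial prediction length γ₀ and the step size η. -/
def Conds2 (R C : Matrix (Fin 2) (Fin 2) ℝ) (γ₀ η : ℝ) : Prop :=
  0 < γ₀ ∧ 0 < η ∧
  4 * γ₀ ^ 2 * spread2 R * spread2 C < 1 ∧
  η < 1 / (spread2 R + spread2 C) ∧ γ₀ < 1 / (spread2 R + spread2 C)

/-- Both agents follow GA-SPP in the 2×2 game: `a`,`b` are the strategies,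
`abar`,`bbar` the predictions, `γ` the prediction lengths, `η` the step size. -/
def GASPP2Run (R C : Matrix (Fin 2) (Fin 2) ℝ) (η : ℝ)
    (γ a b abar bbar : ℕ → ℝ) : Prop :=
  ∀ k : ℕ,
    abar (k + 1) = clamp (a k + γ k * dVr2 R (b k)) ∧
    bbar (k + 1) = clamp (b k + γ k * dVc2 C (a k)) ∧
    ((abar (k + 1) = a k ∧ bbar (k + 1) = b k) →
        a (k + 1) = a k ∧ b (k + 1) = b k ∧ γ (k + 1) = γ k) ∧
    (¬(abar (k + 1) = a k ∧ bbar (k + 1) = b k) →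
        a (k + 1) = clamp (a k + η * dVr2 R (bbar (k + 1))) ∧
        b (k + 1) = clamp (b k + η * dVc2 C (abar (k + 1))) ∧
        ((a (k + 1) = a k ∧ b (k + 1) = b k) →
            ∃ μ : ℝ, 0 < μ ∧ μ < 1 ∧ γ (k + 1) = μ * γ k) ∧
        (¬(a (k + 1) = a k ∧ b (k + 1) = b k) → γ (k + 1) = γ k))

/-- The row agent follows GA-SPP while the column agent follows basic
gradient ascent (GA), based on the opponent's current strategy. -/
def GASPP2vsGARun (R C : Matrix (Fin 2) (Fin 2) ℝ) (η : ℝ)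
    (γ a b abar bbar : ℕ → ℝ) : Prop :=
  ∀ k : ℕ,
    abar (k + 1) = clamp (a k + γ k * dVr2 R (b k)) ∧
    bbar (k + 1) = clamp (b k + γ k * dVc2 C (a k)) ∧
    ((abar (k + 1) = a k ∧ bbar (k + 1) = b k) →
        a (k + 1) = a k ∧ b (k + 1) = b k ∧ γ (k + 1) = γ k) ∧
    (¬(abar (k + 1) = a k ∧ bbar (k + 1) = b k) →
        a (k + 1) = clamp (a k + η * dVr2 R (bbar (k + 1))) ∧
        b (k + 1) = clamp (b k + η * dVc2 C (a k)) ∧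
        ((a (k + 1) = a k ∧ b (k + 1) = b k) →
            ∃ μ : ℝ, 0 < μ ∧ μ < 1 ∧ γ (k + 1) = μ * γ k) ∧
        (¬(a (k + 1) = a k ∧ b (k + 1) = b k) → γ (k + 1) = γ k))

end

/-!
Once the run terminates, its fixed point is a Nash equilibrium. Otherwise replacing `β` by `1 - β`
reduces to `u_r, u_c > 0`, and there are two regimes. If at some time both gradients are
nonnegative (or both nonpositive), they stay so; both strategies then move monotonically to a limit
at which neither gradient allows further progress. Otherwise the gradients have strictly opposite
signs forever. If an indifference point `-b_c / u_c` or `-b_r / u_r` lies outside `[0, 1]`, that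
agent's gradient has a fixed sign, so it reaches a pure strategy in finitely many steps, and then so
does the other agent. If both lie in `[0, 1]`, the weighted distance
`√u_c |α - α*| + √u_r |β - β*|` to the interior equilibrium contracts by the factor
`1 - η √(u_r u_c) (1 - γ₀ √(u_r u_c)) < 1` at every step.
-/

open Set Filter Topology

lemma clamp_mem (x : ℝ) : clamp x ∈ Icc 0 1 :=
  ⟨le_max_left _ _, max_le zero_le_one (min_le_left _ _)⟩

lemma clamp_of_mem {x : ℝ} (hx : x ∈ Icc 0 1) : clamp x = x := by
  simp [clamp, hx.1, hx.2]

lemma clamp_mono : Monotone clamp :=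
  fun _ _ h => max_le_max le_rfl (min_le_min le_rfl h)

lemma clamp_one_sub (x : ℝ) : clamp (1 - x) = 1 - clamp x := by
  simp only [clamp]
  grind

lemma min_one_le_clamp (x : ℝ) : min 1 x ≤ clamp x := le_max_right _ _

lemma clamp_le_max_zero (x : ℝ) : clamp x ≤ max 0 x := max_le_max le_rfl (min_le_right _ _)

lemma clamp_le_self {x : ℝ} (hx : 0 ≤ x) : clamp x ≤ x :=
  (clamp_le_max_zero x).trans_eq (max_eq_right hx)

lemma le_clamp_self {x : ℝ} (hx : x ≤ 1) : x ≤ clamp x :=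
  (min_eq_right hx).symm.trans_le (min_one_le_clamp x)

lemma clamp_le_self_of_pos {x : ℝ} (h : 0 < clamp x) : clamp x ≤ x := by
  rcases le_total x 0 with hx | hx
  · simp [clamp, min_eq_right (hx.trans zero_le_one), max_eq_left hx] at h
  · exact clamp_le_self hx

lemma clamp_eq_one_of_one_le {x : ℝ} (h : 1 ≤ x) : clamp x = 1 := by
  simp [clamp, min_eq_left h]

lemma le_clamp_self_of_lt_one {x : ℝ} (h : clamp x < 1) : x ≤ clamp x := by
  rcases le_total 1 x with hx | hx
  · exact absurd (clamp_eq_one_of_one_le hx) h.ne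
  · exact le_clamp_self hx

lemma le_clamp_add {x t : ℝ} (hx : x ∈ Icc 0 1) (ht : 0 ≤ t) : x ≤ clamp (x + t) :=
  (clamp_of_mem hx).symm.trans_le (clamp_mono (le_add_of_nonneg_right ht))

lemma clamp_add_le {x t : ℝ} (hx : x ∈ Icc 0 1) (ht : t ≤ 0) : clamp (x + t) ≤ x :=
  (clamp_mono (add_le_of_nonpos_right ht)).trans_eq (clamp_of_mem hx)

lemma eq_one_of_clamp_add_eq {x t : ℝ} (hx : x ≤ 1) (ht : 0 < t) (h : clamp (x + t) = x) :
    x = 1 := by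
  have := h ▸ min_one_le_clamp (x + t)
  rcases le_total 1 (x + t) with h1 | h1
  · rw [min_eq_left h1] at this; linarith
  · rw [min_eq_right h1] at this; linarith

lemma eventually_eq_one_of_clamp_add {x t : ℕ → ℝ} {ε : ℝ} (hε : 0 < ε)
    (h : ∀ᶠ k in atTop, x (k + 1) = clamp (x k + t k) ∧ ε ≤ t k) :
    ∀ᶠ k in atTop, x k = 1 := by
  obtain ⟨N, hN⟩ := eventually_atTop.1 h
  have reach : ∃ M ≥ N, 1 ≤ x M := by
    by_contra! hlt
    have grow : ∀ n : ℕ, x N + n * ε ≤ x (N + n) := by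
      intro n
      induction n with
      | zero => simp
      | succ n ih =>
        obtain ⟨hx, ht⟩ := hN (N + n) (by omega)
        have hstep : x (N + n) + t (N + n) ≤ x (N + n + 1) := by
          rw [hx]
          exact le_clamp_self_of_lt_one (hx ▸ hlt (N + n + 1) (by omega))
        rw [← add_assoc]
        push_cast
        linarith
    obtain ⟨n, hn⟩ := exists_nat_gt ((1 - x N) / ε)
    have := hlt (N + n) (by omega)
    have := grow n
    rw [div_lt_iff₀ hε] at hn
    linarith
  obtain ⟨M, hMN, hM⟩ := reach
  have stay : ∀ k ≥ M, 1 ≤ x k := by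
    refine Nat.le_induction hM fun k hk hxk => ?_
    obtain ⟨hx, ht⟩ := hN k (by omega)
    rw [hx, clamp_eq_one_of_one_le (by linarith)]
  filter_upwards [eventually_ge_atTop (M + 1)] with k hk
  obtain ⟨j, rfl⟩ : ∃ j, k = j + 1 := ⟨k - 1, by omega⟩
  exact le_antisymm ((hN j (by omega)).1 ▸ (clamp_mem _).2) (stay _ (by omega))

lemma eventually_eq_zero_of_clamp_add {x t : ℕ → ℝ} {ε : ℝ} (hε : 0 < ε)
    (h : ∀ᶠ k in atTop, x (k + 1) = clamp (x k + t k) ∧ t k ≤ -ε) :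
    ∀ᶠ k in atTop, x k = 0 := by
  have hrefl : ∀ᶠ k in atTop, 1 - x (k + 1) = clamp ((1 - x k) + -t k) ∧ ε ≤ -t k :=
    h.mono fun k ⟨hx, ht⟩ => ⟨by rw [hx, ← clamp_one_sub]; ring_nf, by linarith⟩
  filter_upwards [eventually_eq_one_of_clamp_add (x := fun k => 1 - x k) hε hrefl] with k hk
  linarith

/-- `x` maximizes `t ↦ t * s` on `[0, 1]`. -/
def IsBestResponse (x s : ℝ) : Prop :=
  x ∈ Icc 0 1 ∧ (0 < s → x = 1) ∧ (s < 0 → x = 0)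

lemma isBestResponse_one_sub_iff {x s : ℝ} :
    IsBestResponse (1 - x) s ↔ IsBestResponse x (-s) := by
  simp only [IsBestResponse, mem_Icc]
  grind

lemma IsBestResponse.mul_le {x s t : ℝ} (h : IsBestResponse x s) (ht : t ∈ Icc 0 1) :
    t * s ≤ x * s := by
  obtain ⟨-, h1, h0⟩ := h
  rcases lt_trichotomy s 0 with hs | rfl | hs
  · rw [h0 hs]; nlinarith [ht.1]
  · simp
  · rw [h1 hs]; nlinarith [ht.2]

lemma isBestResponse_of_clamp_eq {x s t : ℝ} (ht : 0 < t) (hx : x ∈ Icc 0 1)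
    (h : clamp (x + t * s) = x) : IsBestResponse x s := by
  refine ⟨hx, fun hs => eq_one_of_clamp_add_eq hx.2 (mul_pos ht hs) h, fun hs => ?_⟩
  have := eq_one_of_clamp_add_eq (x := 1 - x) (t := -(t * s)) (by linarith [hx.1])
    (by nlinarith) (by rw [show 1 - x + -(t * s) = 1 - (x + t * s) by ring, clamp_one_sub, h])
  linarith

lemma isBestResponse_zero {x : ℝ} (hx : x ∈ Icc 0 1) : IsBestResponse x 0 :=
  ⟨hx, fun h => absurd h (lt_irrefl 0), fun h => absurd h (lt_irrefl 0)⟩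

lemma tendsto_of_mul_abs_sub_le {ι : Type*} {l : Filter ι} {u v : ι → ℝ} {x σ : ℝ} (hσ : 0 < σ)
    (hv : Tendsto v l (𝓝 0)) (h : ∀ i, σ * |u i - x| ≤ v i) : Tendsto u l (𝓝 x) := by
  rw [tendsto_iff_norm_sub_tendsto_zero]
  refine squeeze_zero (fun _ => norm_nonneg _) (fun i => ?_) (by simpa using hv.div_const σ)
  rw [Real.norm_eq_abs, le_div_iff₀ hσ, mul_comm]
  exact h i

/-- A run of GA-SPP that never terminates, for the gradient fields `β ↦ ur * β + br` of the row
agent and `α ↦ uc * α + bc` of the column agent. -/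
structure IsGASPPRun (ur br uc bc η : ℝ) (γ a b abar bbar : ℕ → ℝ) : Prop where
  a_zero_mem : a 0 ∈ Icc 0 1
  b_zero_mem : b 0 ∈ Icc 0 1
  abar_succ (k : ℕ) : abar (k + 1) = clamp (a k + γ k * (ur * b k + br))
  bbar_succ (k : ℕ) : bbar (k + 1) = clamp (b k + γ k * (uc * a k + bc))
  a_succ (k : ℕ) : a (k + 1) = clamp (a k + η * (ur * bbar (k + 1) + br))
  b_succ (k : ℕ) : b (k + 1) = clamp (b k + η * (uc * abar (k + 1) + bc))

def ConvergesToEquilibrium (ur br uc bc : ℝ) (a b : ℕ → ℝ) : Prop :=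
  ∃ x y, IsBestResponse x (ur * y + br) ∧ IsBestResponse y (uc * x + bc) ∧
    Tendsto a atTop (𝓝 x) ∧ Tendsto b atTop (𝓝 y)

namespace ConvergesToEquilibrium

variable {ur br uc bc : ℝ} {a b : ℕ → ℝ}

lemma of_swap (h : ConvergesToEquilibrium uc bc ur br b a) :
    ConvergesToEquilibrium ur br uc bc a b :=
  let ⟨y, x, hy, hx, hb, ha⟩ := h
  ⟨x, y, hx, hy, ha, hb⟩

lemma of_reflect
    (h : ConvergesToEquilibrium ur (-ur - br) uc (-uc - bc) (fun k => 1 - a k) (fun k => 1 - b k)) :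
    ConvergesToEquilibrium ur br uc bc a b := by
  obtain ⟨x, y, hx, hy, ha, hb⟩ := h
  refine ⟨1 - x, 1 - y, isBestResponse_one_sub_iff.2 ?_, isBestResponse_one_sub_iff.2 ?_,
    by simpa using ha.const_sub 1, by simpa using hb.const_sub 1⟩
  · convert hx using 1; ring
  · convert hy using 1; ring

lemma of_flip
    (h : ConvergesToEquilibrium (-ur) (ur + br) (-uc) (-bc) a (fun k => 1 - b k)) :
    ConvergesToEquilibrium ur br uc bc a b := by
  obtain ⟨x, y, hx, hy, ha, hb⟩ := h
  refine ⟨x, 1 - y, ?_, isBestResponse_one_sub_iff.2 ?_, ha, by simpa using hb.const_sub 1⟩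
  · convert hx using 1; ring
  · convert hy using 1; ring

lemma of_shift (K : ℕ)
    (h : ConvergesToEquilibrium ur br uc bc (fun k => a (k + K)) (fun k => b (k + K))) :
    ConvergesToEquilibrium ur br uc bc a b :=
  let ⟨x, y, hx, hy, ha, hb⟩ := h
  ⟨x, y, hx, hy, (tendsto_add_atTop_iff_nat K).1 ha, (tendsto_add_atTop_iff_nat K).1 hb⟩

end ConvergesToEquilibrium

namespace IsGASPPRun

variable {ur br uc bc η γ₀ : ℝ} {γ a b abar bbar : ℕ → ℝ}

lemma swap (h : IsGASPPRun ur br uc bc η γ a b abar bbar) :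
    IsGASPPRun uc bc ur br η γ b a bbar abar :=
  ⟨h.b_zero_mem, h.a_zero_mem, h.bbar_succ, h.abar_succ, h.b_succ, h.a_succ⟩

lemma a_mem (h : IsGASPPRun ur br uc bc η γ a b abar bbar) (k : ℕ) : a k ∈ Icc 0 1 := by
  cases k with
  | zero => exact h.a_zero_mem
  | succ k => exact h.a_succ k ▸ clamp_mem _

lemma b_mem (h : IsGASPPRun ur br uc bc η γ a b abar bbar) (k : ℕ) : b k ∈ Icc 0 1 :=
  h.swap.a_mem k

lemma reflect (h : IsGASPPRun ur br uc bc η γ a b abar bbar) :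
    IsGASPPRun ur (-ur - br) uc (-uc - bc) η γ (fun k => 1 - a k) (fun k => 1 - b k)
      (fun k => 1 - abar k) (fun k => 1 - bbar k) where
  a_zero_mem := ⟨by linarith [h.a_zero_mem.2], by linarith [h.a_zero_mem.1]⟩
  b_zero_mem := ⟨by linarith [h.b_zero_mem.2], by linarith [h.b_zero_mem.1]⟩
  abar_succ k := by rw [h.abar_succ, ← clamp_one_sub]; ring_nf
  bbar_succ k := by rw [h.bbar_succ, ← clamp_one_sub]; ring_nf
  a_succ k := by rw [h.a_succ, ← clamp_one_sub]; ring_nf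
  b_succ k := by rw [h.b_succ, ← clamp_one_sub]; ring_nf

lemma flip (h : IsGASPPRun ur br uc bc η γ a b abar bbar) :
    IsGASPPRun (-ur) (ur + br) (-uc) (-bc) η γ a (fun k => 1 - b k) abar (fun k => 1 - bbar k) where
  a_zero_mem := h.a_zero_mem
  b_zero_mem := ⟨by linarith [h.b_zero_mem.2], by linarith [h.b_zero_mem.1]⟩
  abar_succ k := by rw [h.abar_succ]; ring_nf
  bbar_succ k := by rw [h.bbar_succ, ← clamp_one_sub]; ring_nf
  a_succ k := by rw [h.a_succ]; ring_nf
  b_succ k := by rw [h.b_succ, ← clamp_one_sub]; ring_nf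

lemma shift (h : IsGASPPRun ur br uc bc η γ a b abar bbar) (K : ℕ) :
    IsGASPPRun ur br uc bc η (fun k => γ (k + K)) (fun k => a (k + K)) (fun k => b (k + K))
      (fun k => abar (k + K)) (fun k => bbar (k + K)) where
  a_zero_mem := h.a_mem _
  b_zero_mem := h.b_mem _
  abar_succ k := by simp only [Nat.add_right_comm k 1 K, h.abar_succ]
  bbar_succ k := by simp only [Nat.add_right_comm k 1 K, h.bbar_succ]
  a_succ k := by simp only [Nat.add_right_comm k 1 K, h.a_succ]
  b_succ k := by simp only [Nat.add_right_comm k 1 K, h.b_succ]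

lemma le_bbar_succ (h : IsGASPPRun ur br uc bc η γ a b abar bbar) {k : ℕ} (hγ : 0 ≤ γ k)
    (hg : 0 ≤ uc * a k + bc) : b k ≤ bbar (k + 1) :=
  h.bbar_succ k ▸ le_clamp_add (h.b_mem k) (mul_nonneg hγ hg)

lemma le_a_succ (h : IsGASPPRun ur br uc bc η γ a b abar bbar) {k : ℕ} (hur : 0 ≤ ur)
    (hη : 0 ≤ η) (hγ : 0 ≤ γ k) (hf : 0 ≤ ur * b k + br) (hg : 0 ≤ uc * a k + bc) :
    a k ≤ a (k + 1) := by
  have := h.le_bbar_succ hγ hg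
  exact h.a_succ k ▸ le_clamp_add (h.a_mem k) (mul_nonneg hη (by nlinarith))

lemma gradients_nonneg (h : IsGASPPRun ur br uc bc η γ a b abar bbar) (hur : 0 ≤ ur)
    (huc : 0 ≤ uc) (hη : 0 ≤ η) (hγ : ∀ k, 0 ≤ γ k)
    (h0 : 0 ≤ ur * b 0 + br ∧ 0 ≤ uc * a 0 + bc) (k : ℕ) :
    0 ≤ ur * b k + br ∧ 0 ≤ uc * a k + bc := by
  induction k with
  | zero => exact h0
  | succ k ih =>
    have := h.le_a_succ hur hη (hγ k) ih.1 ih.2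
    have := h.swap.le_a_succ huc hη (hγ k) ih.2 ih.1
    constructor <;> nlinarith

lemma isBestResponse_of_tendsto (h : IsGASPPRun ur br uc bc η γ a b abar bbar) (hur : 0 ≤ ur)
    (hη : 0 < η) (hγ : ∀ k, 0 ≤ γ k) (hf : ∀ k, 0 ≤ ur * b k + br)
    (hg : ∀ k, 0 ≤ uc * a k + bc) {x y : ℝ} (ha : Tendsto a atTop (𝓝 x))
    (hb : Tendsto b atTop (𝓝 y)) : IsBestResponse x (ur * y + br) := by
  have hfy : Tendsto (fun k => ur * b k + br) atTop (𝓝 (ur * y + br)) :=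
    (hb.const_mul ur).add_const br
  refine ⟨isClosed_Icc.mem_of_tendsto ha (Eventually.of_forall h.a_mem), fun hpos => ?_,
    fun hneg => absurd (ge_of_tendsto' hfy hf) hneg.not_ge⟩
  have hone : ∀ᶠ k in atTop, a k = 1 := by
    refine eventually_eq_one_of_clamp_add (t := fun k => η * (ur * bbar (k + 1) + br))
      (mul_pos hη (half_pos hpos)) ?_
    filter_upwards [hfy.eventually_const_lt (half_lt_self hpos)] with k hk
    refine ⟨h.a_succ k, mul_le_mul_of_nonneg_left ?_ hη.le⟩
    nlinarith [h.le_bbar_succ (hγ k) (hg k)]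
  exact tendsto_nhds_unique ha (tendsto_nhds_of_eventually_eq hone)

lemma convergesToEquilibrium_of_gradients_nonneg (h : IsGASPPRun ur br uc bc η γ a b abar bbar)
    (hur : 0 ≤ ur) (huc : 0 ≤ uc) (hη : 0 < η) (hγ : ∀ k, 0 ≤ γ k)
    (h0 : 0 ≤ ur * b 0 + br ∧ 0 ≤ uc * a 0 + bc) : ConvergesToEquilibrium ur br uc bc a b := by
  have hf k := (h.gradients_nonneg hur huc hη.le hγ h0 k).1
  have hg k := (h.gradients_nonneg hur huc hη.le hγ h0 k).2
  have ha : Monotone a :=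
    monotone_nat_of_le_succ fun k => h.le_a_succ hur hη.le (hγ k) (hf k) (hg k)
  have hb : Monotone b :=
    monotone_nat_of_le_succ fun k => h.swap.le_a_succ huc hη.le (hγ k) (hg k) (hf k)
  have hxa := tendsto_atTop_ciSup ha ⟨1, forall_mem_range.2 fun k => (h.a_mem k).2⟩
  have hyb := tendsto_atTop_ciSup hb ⟨1, forall_mem_range.2 fun k => (h.b_mem k).2⟩
  exact ⟨_, _, h.isBestResponse_of_tendsto hur hη hγ hf hg hxa hyb,
    h.swap.isBestResponse_of_tendsto huc hη hγ hg hf hyb hxa, hxa, hyb⟩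

lemma convergesToEquilibrium_of_bc_pos (h : IsGASPPRun ur br uc bc η γ a b abar bbar)
    (huc : 0 ≤ uc) (hη : 0 < η) (hγ : ∀ k, 0 ≤ γ k)
    (hoff : ∀ k, (ur * b k + br) * (uc * a k + bc) < 0) (hbc : 0 < bc) :
    ConvergesToEquilibrium ur br uc bc a b := by
  have hg : ∀ x, 0 ≤ x → bc ≤ uc * x + bc := fun x hx => le_add_of_nonneg_left (mul_nonneg huc hx)
  have hb : ∀ᶠ k in atTop, b k = 1 :=
    eventually_eq_one_of_clamp_add (mul_pos hη hbc) (Eventually.of_forall fun k =>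
      ⟨h.b_succ k, mul_le_mul_of_nonneg_left (hg _ (h.abar_succ k ▸ clamp_mem _).1) hη.le⟩)
  have hf : ur + br < 0 := by
    obtain ⟨k, hk⟩ := hb.exists
    simpa [hk] using neg_of_mul_neg_left (hoff k) (hbc.le.trans (hg _ (h.a_mem k).1))
  have ha : ∀ᶠ k in atTop, a k = 0 := by
    refine eventually_eq_zero_of_clamp_add (t := fun k => η * (ur * bbar (k + 1) + br))
      (mul_pos hη (neg_pos.2 hf)) ?_
    filter_upwards [hb] with k hk
    refine ⟨h.a_succ k, le_of_eq ?_⟩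
    rw [h.bbar_succ, hk, clamp_eq_one_of_one_le (le_add_of_nonneg_right
      (mul_nonneg (hγ k) (hbc.le.trans (hg _ (h.a_mem k).1))))]
    ring
  refine ⟨0, 1, ⟨⟨le_rfl, zero_le_one⟩, fun h1 => absurd h1 (by linarith), fun _ => rfl⟩,
    ⟨⟨zero_le_one, le_rfl⟩, fun _ => rfl, fun h0 => absurd h0 (by linarith)⟩,
    tendsto_nhds_of_eventually_eq ha, tendsto_nhds_of_eventually_eq hb⟩

lemma convergesToEquilibrium_of_bc_pos_or_uc_add_bc_neg
    (h : IsGASPPRun ur br uc bc η γ a b abar bbar) (huc : 0 ≤ uc) (hη : 0 < η)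
    (hγ : ∀ k, 0 ≤ γ k) (hoff : ∀ k, (ur * b k + br) * (uc * a k + bc) < 0)
    (hbc : 0 < bc ∨ uc + bc < 0) : ConvergesToEquilibrium ur br uc bc a b := by
  rcases hbc with hbc | hbc
  · exact h.convergesToEquilibrium_of_bc_pos huc hη hγ hoff hbc
  · refine .of_reflect (h.reflect.convergesToEquilibrium_of_bc_pos huc hη hγ (fun k => ?_)
      (by linarith))
    linear_combination hoff k

/-- Overshooting both thresholds at once would need a step with `η σr σc > 1`. -/
lemma lt_a_succ_and_b_succ_lt {σr σc α β : ℝ}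
    (h : IsGASPPRun (σr ^ 2) br (σc ^ 2) bc η γ a b abar bbar) (hσr : 0 ≤ σr) (hσc : 0 ≤ σc)
    (hη : 0 ≤ η) (hησ : η * (σr * σc) ≤ 1) {k : ℕ} (hγ : 0 ≤ γ k) (hα : α ∈ Icc 0 1)
    (hβ : β ∈ Icc 0 1) (hαg : σc ^ 2 * α + bc = 0) (hβf : σr ^ 2 * β + br = 0)
    (hαa : α < a k) (hbβ : b k < β) (hoff : (a (k + 1) - α) * (b (k + 1) - β) < 0) :
    α < a (k + 1) ∧ b (k + 1) < β := by
  obtain rfl : br = -(σr ^ 2 * β) := by linarith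
  obtain rfl : bc = -(σc ^ 2 * α) := by linarith
  rcases mul_neg_iff.1 hoff with h' | h'
  · exact ⟨by linarith, by linarith⟩
  have hbbar : b k ≤ bbar (k + 1) :=
    h.bbar_succ k ▸ le_clamp_add (h.b_mem k) (mul_nonneg hγ (by nlinarith))
  have habar : abar (k + 1) ≤ a k :=
    h.abar_succ k ▸ clamp_add_le (h.a_mem k) (mul_nonpos_of_nonneg_of_nonpos hγ (by nlinarith))
  have ha' : a k + η * (σr ^ 2 * bbar (k + 1) + -(σr ^ 2 * β)) ≤ a (k + 1) :=
    h.a_succ k ▸ le_clamp_self_of_lt_one (h.a_succ k ▸ by linarith [hα.2])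
  have hb' : b (k + 1) ≤ b k + η * (σc ^ 2 * abar (k + 1) + -(σc ^ 2 * α)) :=
    h.b_succ k ▸ clamp_le_self_of_pos (h.b_succ k ▸ by linarith [hβ.1])
  have hA : a k - α < η * σr ^ 2 * (β - b k) := by
    nlinarith [mul_le_mul_of_nonneg_left hbbar (by positivity : 0 ≤ η * σr ^ 2)]
  have hB : β - b k < η * σc ^ 2 * (a k - α) := by
    nlinarith [mul_le_mul_of_nonneg_left habar (by positivity : 0 ≤ η * σc ^ 2)]
  nlinarith [mul_le_mul_of_nonneg_left hB.le (by positivity : 0 ≤ η * σr ^ 2),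
    mul_le_mul_of_nonneg_right (pow_le_one₀ (by positivity) hησ : (η * (σr * σc)) ^ 2 ≤ 1)
      (by linarith : 0 ≤ a k - α)]

lemma dist_succ_le_of_lt_of_lt {σr σc α β : ℝ}
    (h : IsGASPPRun (σr ^ 2) br (σc ^ 2) bc η γ a b abar bbar) (hσr : 0 ≤ σr) (hσc : 0 ≤ σc)
    (hη : 0 ≤ η) (hησ : η * (σr * σc) ≤ 1) {k : ℕ} (hγ : 0 ≤ γ k) (hα : α ∈ Icc 0 1)
    (hβ : β ∈ Icc 0 1) (hαg : σc ^ 2 * α + bc = 0) (hβf : σr ^ 2 * β + br = 0)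
    (hαa : α < a k) (hbβ : b k < β) (hoff : (a (k + 1) - α) * (b (k + 1) - β) < 0) :
    σc * |a (k + 1) - α| + σr * |b (k + 1) - β| ≤
      (1 - η * (σr * σc) * (1 - γ k * (σr * σc))) * (σc * |a k - α| + σr * |b k - β|) := by
  obtain ⟨hαa', hbβ'⟩ := h.lt_a_succ_and_b_succ_lt hσr hσc hη hησ hγ hα hβ hαg hβf hαa hbβ hoff
  obtain rfl : br = -(σr ^ 2 * β) := by linarith
  obtain rfl : bc = -(σc ^ 2 * α) := by linarith
  have hf : γ k * (σr ^ 2 * b k + -(σr ^ 2 * β)) ≤ 0 :=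
    mul_nonpos_of_nonneg_of_nonpos hγ (by nlinarith)
  have hg : 0 ≤ γ k * (σc ^ 2 * a k + -(σc ^ 2 * α)) := mul_nonneg hγ (by nlinarith)
  have habar : a k + γ k * (σr ^ 2 * b k + -(σr ^ 2 * β)) ≤ abar (k + 1) :=
    h.abar_succ k ▸ le_clamp_self (by linarith [(h.a_mem k).2])
  have hbbar : bbar (k + 1) ≤ b k + γ k * (σc ^ 2 * a k + -(σc ^ 2 * α)) :=
    h.bbar_succ k ▸ clamp_le_self (by linarith [(h.b_mem k).1])
  have ha' : a (k + 1) ≤ a k + η * (σr ^ 2 * bbar (k + 1) + -(σr ^ 2 * β)) :=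
    h.a_succ k ▸ clamp_le_self_of_pos (h.a_succ k ▸ by linarith [hα.1])
  have hb' : b k + η * (σc ^ 2 * abar (k + 1) + -(σc ^ 2 * α)) ≤ b (k + 1) :=
    h.b_succ k ▸ le_clamp_self_of_lt_one (h.b_succ k ▸ by linarith [hβ.2])
  have e1 : a (k + 1) - α ≤
      (a k - α) - η * σr ^ 2 * (β - b k) + η * γ k * σr ^ 2 * σc ^ 2 * (a k - α) := by
    nlinarith [mul_le_mul_of_nonneg_left hbbar (by positivity : 0 ≤ η * σr ^ 2)]
  have e2 : β - b (k + 1) ≤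
      (β - b k) - η * σc ^ 2 * (a k - α) + η * γ k * σr ^ 2 * σc ^ 2 * (β - b k) := by
    nlinarith [mul_le_mul_of_nonneg_left habar (by positivity : 0 ≤ η * σc ^ 2)]
  rw [abs_of_pos (sub_pos.2 hαa'), abs_of_neg (sub_neg.2 hbβ'), abs_of_pos (sub_pos.2 hαa),
    abs_of_neg (sub_neg.2 hbβ)]
  nlinarith [mul_le_mul_of_nonneg_left e1 hσc, mul_le_mul_of_nonneg_left e2 hσr]

lemma dist_succ_le {σr σc α β : ℝ}
    (h : IsGASPPRun (σr ^ 2) br (σc ^ 2) bc η γ a b abar bbar) (hσr : 0 ≤ σr) (hσc : 0 ≤ σc)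
    (hη : 0 ≤ η) (hησ : η * (σr * σc) ≤ 1) {k : ℕ} (hγ : 0 ≤ γ k) (hα : α ∈ Icc 0 1)
    (hβ : β ∈ Icc 0 1) (hαg : σc ^ 2 * α + bc = 0) (hβf : σr ^ 2 * β + br = 0)
    (hoff : (a k - α) * (b k - β) < 0) (hoff' : (a (k + 1) - α) * (b (k + 1) - β) < 0) :
    σc * |a (k + 1) - α| + σr * |b (k + 1) - β| ≤
      (1 - η * (σr * σc) * (1 - γ k * (σr * σc))) * (σc * |a k - α| + σr * |b k - β|) := by
  rcases mul_neg_iff.1 hoff with ⟨hαa, hbβ⟩ | ⟨haα, hβb⟩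
  · exact h.dist_succ_le_of_lt_of_lt hσr hσc hη hησ hγ hα hβ hαg hβf (sub_pos.1 hαa)
      (sub_neg.1 hbβ) hoff'
  · have := h.swap.dist_succ_le_of_lt_of_lt hσc hσr hη (by rwa [mul_comm σc]) hγ hβ hα hβf hαg
      (sub_pos.1 hβb) (sub_neg.1 haα) (by rwa [mul_comm])
    convert this using 1 <;> ring

lemma tendsto_of_offDiag_of_mem (h : IsGASPPRun ur br uc bc η γ a b abar bbar) (hur : 0 < ur)
    (huc : 0 < uc) (hη : 0 < η) (hγ : ∀ k, γ k ∈ Icc 0 γ₀) (hησ : η * √(ur * uc) ≤ 1)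
    (hγσ : γ₀ * √(ur * uc) < 1) {α β : ℝ} (hα : α ∈ Icc 0 1) (hβ : β ∈ Icc 0 1)
    (hαg : uc * α + bc = 0) (hβf : ur * β + br = 0)
    (hoff : ∀ k, (ur * b k + br) * (uc * a k + bc) < 0) :
    Tendsto a atTop (𝓝 α) ∧ Tendsto b atTop (𝓝 β) := by
  obtain ⟨σr, hσr, rfl⟩ : ∃ σ, 0 < σ ∧ σ ^ 2 = ur := ⟨√ur, Real.sqrt_pos.2 hur, Real.sq_sqrt hur.le⟩
  obtain ⟨σc, hσc, rfl⟩ : ∃ σ, 0 < σ ∧ σ ^ 2 = uc := ⟨√uc, Real.sqrt_pos.2 huc, Real.sq_sqrt huc.le⟩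
  rw [← mul_pow, Real.sqrt_sq (by positivity)] at hησ hγσ
  have hoff' : ∀ k, (a k - α) * (b k - β) < 0 := fun k => by
    refine neg_of_mul_neg_right (a := (σr * σc) ^ 2) ?_ (sq_nonneg _)
    linear_combination hoff k - (σc ^ 2 * a k + bc) * hβf - σr ^ 2 * (b k - β) * hαg
  set V : ℕ → ℝ := fun k => σc * |a k - α| + σr * |b k - β|
  set ρ := 1 - η * (σr * σc) * (1 - γ₀ * (σr * σc))
  have hV : ∀ k, 0 ≤ V k := fun k => by positivity
  have hγ₀ : 0 ≤ γ₀ := (hγ 0).1.trans (hγ 0).2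
  have hρ0 : 0 ≤ ρ := by nlinarith [mul_nonneg (mul_nonneg hη.le hγ₀) (sq_nonneg (σr * σc))]
  have hρ1 : ρ < 1 := by nlinarith [mul_pos hη (mul_pos hσr hσc)]
  have hρk : ∀ k, 1 - η * (σr * σc) * (1 - γ k * (σr * σc)) ≤ ρ := fun k => by
    nlinarith [mul_le_mul_of_nonneg_left (hγ k).2 (by positivity : 0 ≤ η * (σr * σc) * (σr * σc))]
  have hstep : ∀ k, V (k + 1) ≤ ρ * V k := fun k =>
    (h.dist_succ_le hσr.le hσc.le hη.le hησ (hγ k).1 hα hβ hαg hβf (hoff' k) (hoff' (k + 1))).trans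
      (mul_le_mul_of_nonneg_right (hρk k) (hV k))
  have hV0 : Tendsto V atTop (𝓝 0) :=
    squeeze_zero hV (fun k => le_geom hρ0 k fun j _ => hstep j)
      (by simpa using (tendsto_pow_atTop_nhds_zero_of_lt_one hρ0 hρ1).mul_const (V 0))
  exact ⟨tendsto_of_mul_abs_sub_le hσc hV0 fun k => le_add_of_nonneg_right (by positivity),
    tendsto_of_mul_abs_sub_le hσr hV0 fun k => le_add_of_nonneg_left (by positivity)⟩

lemma convergesToEquilibrium_of_offDiag (h : IsGASPPRun ur br uc bc η γ a b abar bbar)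
    (hur : 0 < ur) (huc : 0 < uc) (hη : 0 < η) (hγ : ∀ k, γ k ∈ Icc 0 γ₀)
    (hησ : η * √(ur * uc) ≤ 1) (hγσ : γ₀ * √(ur * uc) < 1)
    (hoff : ∀ k, (ur * b k + br) * (uc * a k + bc) < 0) :
    ConvergesToEquilibrium ur br uc bc a b := by
  have hγ' k := (hγ k).1
  by_cases hcol : 0 < bc ∨ uc + bc < 0
  · exact h.convergesToEquilibrium_of_bc_pos_or_uc_add_bc_neg huc.le hη hγ' hoff hcol
  by_cases hrow : 0 < br ∨ ur + br < 0
  · exact .of_swap (h.swap.convergesToEquilibrium_of_bc_pos_or_uc_add_bc_neg hur.le hη hγ'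
      (fun k => by rw [mul_comm]; exact hoff k) hrow)
  push Not at hcol hrow
  have hα : -bc / uc ∈ Icc 0 1 :=
    ⟨div_nonneg (by linarith) huc.le, (div_le_one huc).2 (by linarith)⟩
  have hβ : -br / ur ∈ Icc 0 1 :=
    ⟨div_nonneg (by linarith) hur.le, (div_le_one hur).2 (by linarith)⟩
  have hαg : uc * (-bc / uc) + bc = 0 := by field_simp; ring
  have hβf : ur * (-br / ur) + br = 0 := by field_simp; ring
  obtain ⟨ha, hb⟩ := h.tendsto_of_offDiag_of_mem hur huc hη hγ hησ hγσ hα hβ hαg hβf hoff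
  exact ⟨_, _, hβf ▸ isBestResponse_zero hα, hαg ▸ isBestResponse_zero hβ, ha, hb⟩

theorem convergesToEquilibrium (h : IsGASPPRun ur br uc bc η γ a b abar bbar) (hur : 0 < ur)
    (huc : 0 < uc) (hη : 0 < η) (hγ : ∀ k, γ k ∈ Icc 0 γ₀) (hησ : η * √(ur * uc) ≤ 1)
    (hγσ : γ₀ * √(ur * uc) < 1) : ConvergesToEquilibrium ur br uc bc a b := by
  have hγ' k := (hγ k).1
  by_cases hup : ∃ K, 0 ≤ ur * b K + br ∧ 0 ≤ uc * a K + bc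
  · obtain ⟨K, hK⟩ := hup
    exact .of_shift K <| (h.shift K).convergesToEquilibrium_of_gradients_nonneg hur.le huc.le hη
      (fun k => hγ' (k + K)) (by simpa using hK)
  by_cases hdn : ∃ K, ur * b K + br ≤ 0 ∧ uc * a K + bc ≤ 0
  · obtain ⟨K, hK⟩ := hdn
    refine .of_reflect (.of_shift K ?_)
    exact (h.reflect.shift K).convergesToEquilibrium_of_gradients_nonneg hur.le huc.le hη
      (fun k => hγ' (k + K)) (by simp only [zero_add]; constructor <;> linarith)
  push Not at hup hdn
  refine h.convergesToEquilibrium_of_offDiag hur huc hη hγ hησ hγσ fun k => ?_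
  rcases lt_trichotomy (ur * b k + br) 0 with hf | hf | hf
  · exact mul_neg_of_neg_of_pos hf (hdn k hf.le)
  · linarith [hup k hf.ge, hdn k hf.le]
  · exact mul_neg_of_pos_of_neg hf (hup k hf.le)

theorem convergesToEquilibrium_of_mul_pos (h : IsGASPPRun ur br uc bc η γ a b abar bbar)
    (hu : 0 < ur * uc) (hη : 0 < η) (hγ : ∀ k, γ k ∈ Icc 0 γ₀) (hησ : η * √(ur * uc) ≤ 1)
    (hγσ : γ₀ * √(ur * uc) < 1) : ConvergesToEquilibrium ur br uc bc a b := by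
  rcases mul_pos_iff.1 hu with ⟨hur, huc⟩ | ⟨hur, huc⟩
  · exact h.convergesToEquilibrium hur huc hη hγ hησ hγσ
  · rw [← neg_mul_neg ur uc] at hησ hγσ
    exact .of_flip (h.flip.convergesToEquilibrium (neg_pos.2 hur) (neg_pos.2 huc) hη hγ hησ hγσ)

end IsGASPPRun

lemma isNash2_of_isBestResponse {R C : Matrix (Fin 2) (Fin 2) ℝ} {α β : ℝ}
    (hr : IsBestResponse α (dVr2 R β)) (hc : IsBestResponse β (dVc2 C α)) : IsNash2 R C α β := by
  refine ⟨hr.1, hc.1, fun α' hα' => ?_, fun β' hβ' => ?_⟩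
  · have e : Vr2 R α β - Vr2 R α' β = α * dVr2 R β - α' * dVr2 R β := by
      unfold Vr2 dVr2 ur2 br2; ring
    linarith [hr.mul_le hα']
  · have e : Vc2 C α β - Vc2 C α β' = β * dVc2 C α - β' * dVc2 C α := by
      unfold Vc2 dVc2 uc2 bc2; ring
    linarith [hc.mul_le hβ']

lemma sub_le_spread2 (M : Matrix (Fin 2) (Fin 2) ℝ) (i j i' j' : Fin 2) :
    M i j - M i' j' ≤ spread2 M :=
  sub_le_sub (Finset.le_sup' (fun p : Fin 2 × Fin 2 => M p.1 p.2) (Finset.mem_univ (i, j)))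
    (Finset.inf'_le (fun p : Fin 2 × Fin 2 => M p.1 p.2) (Finset.mem_univ (i', j')))

lemma abs_ur2_le (M : Matrix (Fin 2) (Fin 2) ℝ) : |ur2 M| ≤ 2 * spread2 M := by
  rw [abs_le]
  unfold ur2
  constructor <;> linarith [sub_le_spread2 M 0 1 0 0, sub_le_spread2 M 1 0 1 1,
    sub_le_spread2 M 0 0 0 1, sub_le_spread2 M 1 1 1 0]

lemma sqrt_ur2_mul_uc2_le (R C : Matrix (Fin 2) (Fin 2) ℝ) :
    √(ur2 R * uc2 C) ≤ spread2 R + spread2 C := by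
  have hR := abs_ur2_le R
  have hC : |uc2 C| ≤ 2 * spread2 C := abs_ur2_le C
  have hR0 := abs_nonneg (ur2 R)
  have hC0 := abs_nonneg (uc2 C)
  rw [Real.sqrt_le_left (by linarith)]
  calc ur2 R * uc2 C ≤ |ur2 R| * |uc2 C| := (le_abs_self _).trans (abs_mul _ _).le
    _ ≤ (2 * spread2 R) * (2 * spread2 C) := mul_le_mul hR hC hC0 (by linarith)
    _ ≤ (spread2 R + spread2 C) ^ 2 := by nlinarith [sq_nonneg (spread2 R - spread2 C)]

lemma mul_sqrt_lt_one {x u S : ℝ} (hx : 0 < x) (hxS : x < 1 / S) (hu : √u ≤ S) :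
    x * √u < 1 := by
  have hS : 0 < S := one_div_pos.1 (hx.trans hxS)
  calc x * √u ≤ x * S := mul_le_mul_of_nonneg_left hu hx.le
    _ < 1 := (lt_div_iff₀ hS).1 hxS

namespace GASPP2Run

variable {R C : Matrix (Fin 2) (Fin 2) ℝ} {η γ₀ : ℝ} {γ a b abar bbar : ℕ → ℝ}

lemma gamma_mem (hrun : GASPP2Run R C η γ a b abar bbar) (hγ₀ : γ 0 = γ₀) (hγ₀pos : 0 < γ₀)
    (k : ℕ) : γ k ∈ Ioc 0 γ₀ := by
  induction k with
  | zero => rw [hγ₀]; exact ⟨hγ₀pos, le_rfl⟩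
  | succ k ih =>
    obtain ⟨-, -, hfix, hmove⟩ := hrun k
    by_cases hf : abar (k + 1) = a k ∧ bbar (k + 1) = b k
    · rw [(hfix hf).2.2]; exact ih
    obtain ⟨-, -, hshrink, hkeep⟩ := hmove hf
    by_cases hs : a (k + 1) = a k ∧ b (k + 1) = b k
    · obtain ⟨μ, hμ0, hμ1, hγ⟩ := hshrink hs
      rw [hγ]
      exact ⟨mul_pos hμ0 ih.1, by nlinarith [ih.1, ih.2]⟩
    · rw [hkeep hs]; exact ih

lemma mem (hrun : GASPP2Run R C η γ a b abar bbar) (ha₀ : a 0 ∈ Icc 0 1) (hb₀ : b 0 ∈ Icc 0 1)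
    (k : ℕ) : a k ∈ Icc 0 1 ∧ b k ∈ Icc 0 1 := by
  induction k with
  | zero => exact ⟨ha₀, hb₀⟩
  | succ k ih =>
    obtain ⟨-, -, hfix, hmove⟩ := hrun k
    by_cases hf : abar (k + 1) = a k ∧ bbar (k + 1) = b k
    · obtain ⟨ha, hb, -⟩ := hfix hf
      rw [ha, hb]; exact ih
    · obtain ⟨ha, hb, -⟩ := hmove hf
      rw [ha, hb]; exact ⟨clamp_mem _, clamp_mem _⟩

lemma eq_of_terminates (hrun : GASPP2Run R C η γ a b abar bbar) {k : ℕ}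
    (hk : abar (k + 1) = a k ∧ bbar (k + 1) = b k) :
    ∀ j ≥ k, a j = a k ∧ b j = b k ∧ γ j = γ k := by
  refine Nat.le_induction ⟨rfl, rfl, rfl⟩ fun j _ ih => ?_
  obtain ⟨habar, hbbar, hfix, -⟩ := hrun j
  have hj : abar (j + 1) = a j ∧ bbar (j + 1) = b j := by
    rw [habar, hbbar, ih.1, ih.2.1, ih.2.2, ← (hrun k).1, ← (hrun k).2.1]
    exact hk
  obtain ⟨ha, hb, hγ⟩ := hfix hj
  exact ⟨ha.trans ih.1, hb.trans ih.2.1, hγ.trans ih.2.2⟩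

lemma isNash2_of_terminates (hrun : GASPP2Run R C η γ a b abar bbar) {k : ℕ} (hγ : 0 < γ k)
    (hmem : a k ∈ Icc 0 1 ∧ b k ∈ Icc 0 1) (hk : abar (k + 1) = a k ∧ bbar (k + 1) = b k) :
    IsNash2 R C (a k) (b k) :=
  isNash2_of_isBestResponse (isBestResponse_of_clamp_eq hγ hmem.1 ((hrun k).1 ▸ hk.1))
    (isBestResponse_of_clamp_eq hγ hmem.2 ((hrun k).2.1 ▸ hk.2))

lemma isGASPPRun (hrun : GASPP2Run R C η γ a b abar bbar) (ha₀ : a 0 ∈ Icc 0 1)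
    (hb₀ : b 0 ∈ Icc 0 1) (hnot : ∀ k, ¬(abar (k + 1) = a k ∧ bbar (k + 1) = b k)) :
    IsGASPPRun (ur2 R) (br2 R) (uc2 C) (bc2 C) η γ a b abar bbar where
  a_zero_mem := ha₀
  b_zero_mem := hb₀
  abar_succ k := (hrun k).1
  bbar_succ k := (hrun k).2.1
  a_succ k := ((hrun k).2.2.2 (hnot k)).1
  b_succ k := ((hrun k).2.2.2 (hnot k)).2.1

end GASPP2Run

/-- Lemma 4: in a 2×2 game with u_r u_c > 0, if both agents
follow GA-SPP (Conditions 1–3), then from any initial strategy pair the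
strategies converge to a point that is a Nash equilibrium. -/
theorem stmt10 (R C : Matrix (Fin 2) (Fin 2) ℝ)
    (hU : 0 < ur2 R * uc2 C)
    (γ₀ η : ℝ) (hcond : Conds2 R C γ₀ η)
    (γ a b abar bbar : ℕ → ℝ)
    (hγ₀ : γ 0 = γ₀) (ha₀ : a 0 ∈ Set.Icc (0 : ℝ) 1) (hb₀ : b 0 ∈ Set.Icc (0 : ℝ) 1)
    (hrun : GASPP2Run R C η γ a b abar bbar) :
    ∃ αs βs : ℝ, IsNash2 R C αs βs ∧
      Filter.Tendsto (fun k => (a k, b k)) Filter.atTop (nhds (αs, βs)) := by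
  obtain ⟨hγ₀pos, hηpos, -, hη, hγ₀'⟩ := hcond
  have hγ := hrun.gamma_mem hγ₀ hγ₀pos
  by_cases hterm : ∃ k, abar (k + 1) = a k ∧ bbar (k + 1) = b k
  · obtain ⟨k, hk⟩ := hterm
    refine ⟨a k, b k, hrun.isNash2_of_terminates (hγ k).1 (hrun.mem ha₀ hb₀ k) hk,
      tendsto_atTop_of_eventually_const (i₀ := k) fun j hj => ?_⟩
    rw [(hrun.eq_of_terminates hk j hj).1, (hrun.eq_of_terminates hk j hj).2.1]
  have hσ := sqrt_ur2_mul_uc2_le R C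
  obtain ⟨x, y, hx, hy, ha, hb⟩ :=
    (hrun.isGASPPRun ha₀ hb₀ (not_exists.1 hterm)).convergesToEquilibrium_of_mul_pos hU hηpos
      (fun k => Ioc_subset_Icc_self (hγ k)) (mul_sqrt_lt_one hηpos hη hσ).le
      (mul_sqrt_lt_one hγ₀pos hγ₀' hσ)
  exact ⟨x, y, isNash2_of_isBestResponse hx hy, ha.prodMk_nhds hb⟩
end

section
/- In a 2-agent 2×2 general-sum game with u_r u_c > 0 in which neither center coordinate α^c = −b_c/u_c nor β^c = −b_r/u_r lies in the valid probability range [0,1], if both agents follow GA-SPP with γ₀ and η satisfying Conditions 1–3, then from any initial strategy pair the sequence (α_k,β_k) converges to a Nash equilibrium. -/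
/- Framework for 2-agent 2×2 general-sum games with scalar strategies
   α, β ∈ [0,1] (the probability of the first action). -/

open Filter Topology

/-! Since neither center coordinate lies in `[0,1]`, each gradient `dVr2 R`, `dVc2 C` is an
affine function without zero on `[0,1]`, so each agent has a dominant pure strategy `p ∈ {0,1}`.
Every step of GA-SPP pushes that agent's strategy toward `p` by at least `η m` for a uniform
margin `m > 0`, or the algorithm has already stopped at `p`; hence the strategies reach the pure
profile `(p, q)` in finitely many steps, and a profile of dominant strategies is a Nash
equilibrium. -/

open Set

lemma clamp_mem_Icc (x : ℝ) : clamp x ∈ Icc (0 : ℝ) 1 :=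
  ⟨le_max_left _ _, max_le zero_le_one (min_le_left _ _)⟩

lemma mem_Icc_of_eq_zero_or_eq_one {p : ℝ} (hp : p = 0 ∨ p = 1) : p ∈ Icc (0 : ℝ) 1 := by
  rcases hp with rfl | rfl <;> norm_num

/-- Here `2 * p - 1` is the sign `±1` of the direction pointing to the vertex `p`. -/
lemma abs_clamp_add_sub_le {p m x c : ℝ} (hp : p = 0 ∨ p = 1) (hc : m ≤ (2 * p - 1) * c) :
    |clamp (x + c) - p| ≤ max 0 (|x - p| - m) := by
  obtain ⟨h0, h1⟩ := clamp_mem_Icc (x + c)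
  rcases hp with rfl | rfl
  · have : clamp (x + c) ≤ max 0 (x + c) := max_le_max le_rfl (min_le_right _ _)
    rw [sub_zero, sub_zero, abs_of_nonneg h0]
    exact this.trans (max_le_max le_rfl (by linarith [le_abs_self x]))
  · have : min 1 (x + c) ≤ clamp (x + c) := le_max_right _ _
    rw [abs_of_nonpos (by linarith)]
    rcases min_cases 1 (x + c) with ⟨h, -⟩ | ⟨h, -⟩ <;> rw [h] at this
    · exact le_max_of_le_left (by linarith)
    · exact le_max_of_le_right (by linarith [neg_abs_le (x - 1)])

lemma eq_of_clamp_add_eq {p m x c : ℝ} (hp : p = 0 ∨ p = 1) (hm : 0 < m)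
    (hc : m ≤ (2 * p - 1) * c) (hx : clamp (x + c) = x) : x = p := by
  have h := abs_clamp_add_sub_le (x := x) hp hc
  rw [hx] at h
  rcases le_max_iff.mp h with h | h
  · exact sub_eq_zero.mp (abs_nonpos_iff.mp h)
  · linarith

/-- For `u = 0` the root reads `-b / 0 = 0 ∈ [0,1]`. -/
lemma exists_vertex_margin {u b : ℝ} (h : -b / u ∉ Icc (0 : ℝ) 1) :
    ∃ p : ℝ, (p = 0 ∨ p = 1) ∧ ∃ m > 0, ∀ x ∈ Icc (0 : ℝ) 1, m ≤ (2 * p - 1) * (u * x + b) := by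
  have hsign : 0 < b * (u + b) := by
    by_contra! hle
    apply h
    rcases eq_or_ne u 0 with rfl | hu
    · simp
    -- with `t = -b / u`, `b * (u + b) = -u² t (1 - t)`
    have hb : b = -u * (-b / u) := by field_simp
    set t := -b / u
    have hu2 : 0 < u ^ 2 := by positivity
    have ht : 0 ≤ t * (1 - t) := by
      rw [hb] at hle
      nlinarith
    constructor <;> nlinarith
  have margin : ∀ p : ℝ, 0 < (2 * p - 1) * b → 0 < (2 * p - 1) * (u + b) →
      ∃ m > 0, ∀ x ∈ Icc (0 : ℝ) 1, m ≤ (2 * p - 1) * (u * x + b) := by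
    intro p h₀ h₁
    set s := 2 * p - 1
    refine ⟨min (s * b) (s * (u + b)), lt_min h₀ h₁, fun x ⟨hx₀, hx₁⟩ => ?_⟩
    nlinarith [mul_le_mul_of_nonneg_left (min_le_left (s * b) (s * (u + b))) (sub_nonneg.2 hx₁),
      mul_le_mul_of_nonneg_left (min_le_right (s * b) (s * (u + b))) hx₀]
  rcases lt_or_gt_of_ne (left_ne_zero_of_mul hsign.ne') with hb | hb
  · exact ⟨0, .inl rfl, margin 0 (by linarith) (by nlinarith)⟩
  · exact ⟨1, .inr rfl, margin 1 (by linarith) (by nlinarith)⟩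

lemma tendsto_of_abs_sub_succ_le {x : ℕ → ℝ} {p ε : ℝ} (hε : 0 < ε)
    (hstep : ∀ k, |x (k + 1) - p| ≤ max 0 (|x k - p| - ε)) : Tendsto x atTop (𝓝 p) := by
  have hbound : ∀ k : ℕ, |x k - p| ≤ max 0 (|x 0 - p| - k * ε) := by
    intro k
    induction k with
    | zero => simp
    | succ k ih =>
      refine (hstep k).trans (max_le (le_max_left _ _) ?_)
      rcases le_max_iff.mp ih with h | h
      · exact le_max_of_le_left (by linarith)
      · exact le_max_of_le_right (by push_cast; linarith)
  obtain ⟨N, hN⟩ := exists_nat_ge (|x 0 - p| / ε)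
  refine tendsto_atTop_of_eventually_const (i₀ := N) fun k hk => ?_
  have hk : |x 0 - p| ≤ k * ε := by
    rw [div_le_iff₀ hε] at hN
    nlinarith [(Nat.cast_le (α := ℝ)).mpr hk]
  have := (hbound k).trans_eq (max_eq_left (by linarith))
  exact sub_eq_zero.mp (abs_nonpos_iff.mp this)

/-- One agent's GA-SPP move from `x` to `x'` against the opponent's `y`: either the algorithm has
stopped (then `y` equals its own prediction, hence lies in `[0,1]`), or a projected gradient step
against the opponent's prediction. -/
def IsSPPStep (g : ℝ → ℝ) (γ η x y x' : ℝ) : Prop :=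
  (x' = x ∧ clamp (x + γ * g y) = x ∧ y ∈ Icc (0 : ℝ) 1) ∨
    ∃ y' ∈ Icc (0 : ℝ) 1, x' = clamp (x + η * g y')

lemma IsSPPStep.abs_sub_le {g : ℝ → ℝ} {γ η x y x' p m : ℝ} (h : IsSPPStep g γ η x y x')
    (hp : p = 0 ∨ p = 1) (hm : 0 < m) (hγ : 0 < γ) (hη : 0 < η)
    (hg : ∀ y ∈ Icc (0 : ℝ) 1, m ≤ (2 * p - 1) * g y) :
    |x' - p| ≤ max 0 (|x - p| - η * m) := by
  have scaled : ∀ {t : ℝ}, 0 < t → ∀ y ∈ Icc (0 : ℝ) 1, t * m ≤ (2 * p - 1) * (t * g y) :=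
    fun ht y hy => by
      nlinarith [mul_le_mul_of_nonneg_left (hg y hy) ht.le]
  rcases h with ⟨rfl, hfix, hy⟩ | ⟨y', hy', rfl⟩
  · rw [eq_of_clamp_add_eq hp (mul_pos hγ hm) (scaled hγ y hy) hfix, sub_self, abs_zero]
    exact le_max_left _ _
  · exact abs_clamp_add_sub_le hp (scaled hη y' hy')

section Run

variable {R C : Matrix (Fin 2) (Fin 2) ℝ} {η : ℝ} {γ a b abar bbar : ℕ → ℝ}

lemma GASPP2Run.isSPPStep (hrun : GASPP2Run R C η γ a b abar bbar) (k : ℕ) :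
    IsSPPStep (dVr2 R) (γ k) η (a k) (b k) (a (k + 1)) ∧
      IsSPPStep (dVc2 C) (γ k) η (b k) (a k) (b (k + 1)) := by
  obtain ⟨habar, hbbar, hstop, hmove⟩ := hrun k
  by_cases H : abar (k + 1) = a k ∧ bbar (k + 1) = b k
  · obtain ⟨ha, hb, -⟩ := hstop H
    have hamem : a k ∈ Icc (0 : ℝ) 1 := H.1 ▸ habar ▸ clamp_mem_Icc _
    have hbmem : b k ∈ Icc (0 : ℝ) 1 := H.2 ▸ hbbar ▸ clamp_mem_Icc _
    exact ⟨.inl ⟨ha, habar ▸ H.1, hbmem⟩, .inl ⟨hb, hbbar ▸ H.2, hamem⟩⟩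
  · obtain ⟨ha, hb, -⟩ := hmove H
    exact ⟨.inr ⟨_, hbbar ▸ clamp_mem_Icc _, ha⟩, .inr ⟨_, habar ▸ clamp_mem_Icc _, hb⟩⟩

lemma GASPP2Run.gamma_pos (hrun : GASPP2Run R C η γ a b abar bbar) (h₀ : 0 < γ 0) :
    ∀ k, 0 < γ k := by
  intro k
  induction k with
  | zero => exact h₀
  | succ k ih =>
    obtain ⟨-, -, hstop, hmove⟩ := hrun k
    by_cases H : abar (k + 1) = a k ∧ bbar (k + 1) = b k
    · rw [(hstop H).2.2]; exact ih
    · obtain ⟨-, -, hshrink, hkeep⟩ := hmove H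
      by_cases H' : a (k + 1) = a k ∧ b (k + 1) = b k
      · obtain ⟨μ, hμ, -, hγ⟩ := hshrink H'
        rw [hγ]; exact mul_pos hμ ih
      · rw [hkeep H']; exact ih

end Run

lemma Vr2_sub_Vr2 (R : Matrix (Fin 2) (Fin 2) ℝ) (α α' β : ℝ) :
    Vr2 R α' β - Vr2 R α β = dVr2 R β * (α' - α) := by
  unfold Vr2 dVr2 ur2 br2; ring

lemma Vc2_sub_Vc2 (C : Matrix (Fin 2) (Fin 2) ℝ) (α β β' : ℝ) :
    Vc2 C α β' - Vc2 C α β = dVc2 C α * (β' - β) := by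
  unfold Vc2 dVc2 uc2 bc2; ring

lemma mul_sub_vertex_nonpos {p g x : ℝ} (hp : p = 0 ∨ p = 1) (hg : 0 ≤ (2 * p - 1) * g)
    (hx : x ∈ Icc (0 : ℝ) 1) : g * (x - p) ≤ 0 := by
  rcases hp with rfl | rfl <;> nlinarith [hx.1, hx.2]

lemma isNash2_of_vertex {R C : Matrix (Fin 2) (Fin 2) ℝ} {p q : ℝ} (hp : p = 0 ∨ p = 1)
    (hq : q = 0 ∨ q = 1) (hr : 0 ≤ (2 * p - 1) * dVr2 R q) (hc : 0 ≤ (2 * q - 1) * dVc2 C p) :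
    IsNash2 R C p q := by
  refine ⟨mem_Icc_of_eq_zero_or_eq_one hp, mem_Icc_of_eq_zero_or_eq_one hq,
    fun α' hα' => ?_, fun β' hβ' => ?_⟩
  · linarith [Vr2_sub_Vr2 R p α' q, mul_sub_vertex_nonpos hp hr hα']
  · linarith [Vc2_sub_Vc2 C p q β', mul_sub_vertex_nonpos hq hc hβ']

theorem stmt13_general (R C : Matrix (Fin 2) (Fin 2) ℝ)
    (hαc : -bc2 C / uc2 C ∉ Set.Icc (0 : ℝ) 1)
    (hβc : -br2 R / ur2 R ∉ Set.Icc (0 : ℝ) 1)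
    (γ₀ η : ℝ) (hcond : Conds2 R C γ₀ η)
    (γ a b abar bbar : ℕ → ℝ)
    (hγ₀ : γ 0 = γ₀)
    (hrun : GASPP2Run R C η γ a b abar bbar) :
    ∃ αs βs : ℝ, IsNash2 R C αs βs ∧
      Filter.Tendsto (fun k => (a k, b k)) Filter.atTop (nhds (αs, βs)) := by
  obtain ⟨hγ₀pos, hη, -⟩ := hcond
  obtain ⟨p, hp, mr, hmr, hgr⟩ := exists_vertex_margin hβc
  obtain ⟨q, hq, mc, hmc, hgc⟩ := exists_vertex_margin hαc
  have hγ := hrun.gamma_pos (hγ₀ ▸ hγ₀pos)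
  refine ⟨p, q, isNash2_of_vertex hp hq ?_ ?_, .prodMk_nhds ?_ ?_⟩
  · exact hmr.le.trans (hgr q (mem_Icc_of_eq_zero_or_eq_one hq))
  · exact hmc.le.trans (hgc p (mem_Icc_of_eq_zero_or_eq_one hp))
  · exact tendsto_of_abs_sub_succ_le (mul_pos hη hmr) fun k =>
      (hrun.isSPPStep k).1.abs_sub_le hp hmr (hγ k) hη hgr
  · exact tendsto_of_abs_sub_succ_le (mul_pos hη hmc) fun k =>
      (hrun.isSPPStep k).2.abs_sub_le hq hmc (hγ k) hη hgc

/-- Property 3: in a 2×2 game with u_r u_c > 0 in which neither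
center coordinate α^c = −b_c/u_c nor β^c = −b_r/u_r lies in [0,1], if both
agents follow GA-SPP (Conditions 1–3), then from any initial strategy pair the
strategies converge to a Nash equilibrium. -/
theorem stmt13 (R C : Matrix (Fin 2) (Fin 2) ℝ)
    (hU : 0 < ur2 R * uc2 C)
    (hαc : -bc2 C / uc2 C ∉ Set.Icc (0 : ℝ) 1)
    (hβc : -br2 R / ur2 R ∉ Set.Icc (0 : ℝ) 1)
    (γ₀ η : ℝ) (hcond : Conds2 R C γ₀ η)
    (γ a b abar bbar : ℕ → ℝ)
    (hγ₀ : γ 0 = γ₀) (ha₀ : a 0 ∈ Set.Icc (0 : ℝ) 1) (hb₀ : b 0 ∈ Set.Icc (0 : ℝ) 1)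
    (hrun : GASPP2Run R C η γ a b abar bbar) :
    ∃ αs βs : ℝ, IsNash2 R C αs βs ∧
      Filter.Tendsto (fun k => (a k, b k)) Filter.atTop (nhds (αs, βs)) :=
  stmt13_general R C hαc hβc γ₀ η hcond γ a b abar bbar hγ₀ hrun
end
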